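/- Let T: E → F be a bounded A-linear adjointable operator between Hilbert A-modules with closed range. Then Ker(T) is orthogonally complemented in E with complement Ran(T*), and Ran(T) is orthogonally complemented in F with complement Ker(T*). -/

import Mathlib

/- Framework: Hilbert C*-modules over a C*-algebra `A` (via Mathlib's `CStarModule`),
densely defined operators as `LinearPMap`s, `A`-valued orthogonality, adjoints,
regularity, graphs inside `E ⊕ F`. -/

open scoped InnerProductSpace RightActions WithCStarModule

/-- The `CStarModule` class of the older Mathlib: a Hilbert C⋆-module with a *right* action of
`A` (via `Aᵐᵒᵖ`), `A`-linear on the right in the second variable. Mathlib's `CStarModule` is now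
a left module, so the old notion is restated here under a new name. -/
class RightCStarModule (A : outParam <| Type*) (E : Type*) [NonUnitalSemiring A] [StarRing A]
    [Module ℂ A] [AddCommGroup E] [Module ℂ E] [PartialOrder A] [SMul Aᵐᵒᵖ E] [Norm A] [Norm E]
    extends Inner A E where
  inner_add_right {x} {y} {z} : inner x (y + z) = inner x y + inner x z
  inner_self_nonneg {x} : 0 ≤ inner x x
  inner_self {x} : inner x x = 0 ↔ x = 0
  inner_op_smul_right {a : A} {x y : E} : inner x (y <• a) = inner x y * a
  inner_smul_right_complex {z : ℂ} {x} {y} : inner x (z • y) = z • inner x y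
  star_inner x y : star (inner x y) = inner y x
  norm_eq_sqrt_norm_inner_self x : ‖x‖ = √‖inner x x‖

namespace RightCStarModule

/-- Type synonym carrying the conjugate complex structure and the left action
`a • y = y <• star a`, which turns a right module into a (new-style) `CStarModule`. -/
def ConjSyn (A E : Type*) : Type _ := E

section Syn

variable {A E : Type*}

instance instACGSyn [AddCommGroup E] : AddCommGroup (ConjSyn A E) := ‹AddCommGroup E›

instance instNormSyn [Norm E] : Norm (ConjSyn A E) := ‹Norm E›

instance instModuleSyn [AddCommGroup E] [Module ℂ E] : Module ℂ (ConjSyn A E) :=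
  Module.compHom E (starRingEnd ℂ)

instance instSMulSyn [Star A] [SMul Aᵐᵒᵖ E] : SMul A (ConjSyn A E) :=
  ⟨fun a (y : E) => (y <• star a : E)⟩

end Syn

section Transfer

variable {A E : Type*} [NonUnitalCStarAlgebra A] [PartialOrder A]
  [AddCommGroup E] [Module ℂ E] [SMul Aᵐᵒᵖ E] [Norm E] [RightCStarModule A E]

instance instCStarSyn : CStarModule A (ConjSyn A E) where
  inner x y := Inner.inner A (show E from y) (show E from x)
  inner_add_right {x y z} := by
    change Inner.inner A ((show E from y) + (show E from z)) (show E from x) = _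
    rw [← RightCStarModule.star_inner (show E from x), RightCStarModule.inner_add_right, star_add,
      RightCStarModule.star_inner, RightCStarModule.star_inner]
  inner_self_nonneg {x} := RightCStarModule.inner_self_nonneg (x := (show E from x))
  inner_self {x} := RightCStarModule.inner_self (x := (show E from x))
  inner_op_smul_right {a x y} := by
    change Inner.inner A ((show E from y) <• star a) (show E from x)
      = a * Inner.inner A (show E from y) (show E from x)
    rw [← RightCStarModule.star_inner (show E from x), RightCStarModule.inner_op_smul_right,
      star_mul, star_star, RightCStarModule.star_inner]
  inner_smul_right_complex {z x y} := by
    change Inner.inner A ((starRingEnd ℂ z) • (show E from y)) (show E from x)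
      = z • Inner.inner A (show E from y) (show E from x)
    rw [← RightCStarModule.star_inner (show E from x), RightCStarModule.inner_smul_right_complex,
      star_smul, RightCStarModule.star_inner]
    simp
  star_inner x y := RightCStarModule.star_inner (show E from y) (show E from x)
  norm_eq_sqrt_norm_inner_self x := RightCStarModule.norm_eq_sqrt_norm_inner_self (show E from x)

end Transfer

/-- The normed-space core of an old-style Hilbert C⋆-module. -/
lemma normedSpaceCore' (A : Type*) {E : Type*} [NonUnitalCStarAlgebra A] [PartialOrder A]
    [StarOrderedRing A] [AddCommGroup E] [Module ℂ E] [SMul Aᵐᵒᵖ E] [Norm E]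
    [RightCStarModule A E] : NormedSpace.Core ℂ E where
  norm_nonneg x := (CStarModule.normedSpaceCore A (E := ConjSyn A E)).norm_nonneg x
  norm_eq_zero_iff x := (CStarModule.normedSpaceCore A (E := ConjSyn A E)).norm_eq_zero_iff x
  norm_smul c x := by
    have h := (CStarModule.normedSpaceCore A (E := ConjSyn A E)).norm_smul (starRingEnd ℂ c) x
    calc ‖c • x‖ = ‖(starRingEnd ℂ (starRingEnd ℂ c)) • x‖ := by rw [Complex.conj_conj]
      _ = ‖starRingEnd ℂ c‖ * ‖x‖ := h
      _ = ‖c‖ * ‖x‖ := by rw [Complex.norm_conj]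
  norm_triangle x y := (CStarModule.normedSpaceCore A (E := ConjSyn A E)).norm_triangle x y

section Prod

variable {A : Type*} [NonUnitalCStarAlgebra A] [PartialOrder A]
variable {E F : Type*}
variable [NormedAddCommGroup E] [Module ℂ E] [SMul Aᵐᵒᵖ E]
variable [NormedAddCommGroup F] [Module ℂ F] [SMul Aᵐᵒᵖ F]
variable [RightCStarModule A E] [RightCStarModule A F]

noncomputable instance instNormProd : Norm C⋆ᵐᵒᵈ(A, E × F) where
  norm x := √‖⟪x.1, x.1⟫_A + ⟪x.2, x.2⟫_A‖

variable [StarOrderedRing A]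

noncomputable instance instProd : RightCStarModule A C⋆ᵐᵒᵈ(A, E × F) where
  inner x y := ⟪x.1, y.1⟫_A + ⟪x.2, y.2⟫_A
  inner_add_right {x y z} := by
    change ⟪x.1, y.1 + z.1⟫_A + ⟪x.2, y.2 + z.2⟫_A
      = (⟪x.1, y.1⟫_A + ⟪x.2, y.2⟫_A) + (⟪x.1, z.1⟫_A + ⟪x.2, z.2⟫_A)
    rw [RightCStarModule.inner_add_right, RightCStarModule.inner_add_right]
    abel
  inner_self_nonneg {x} :=
    add_nonneg RightCStarModule.inner_self_nonneg RightCStarModule.inner_self_nonneg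
  inner_self {x} := by
    change ⟪x.1, x.1⟫_A + ⟪x.2, x.2⟫_A = 0 ↔ x = 0
    constructor
    · intro h
      have n1 := RightCStarModule.inner_self_nonneg (A := A) (x := x.1)
      have n2 := RightCStarModule.inner_self_nonneg (A := A) (x := x.2)
      have h1 : ⟪x.1, x.1⟫_A = 0 := le_antisymm ((le_add_of_nonneg_right n2).trans_eq h) n1
      have h2 : ⟪x.2, x.2⟫_A = 0 := le_antisymm ((le_add_of_nonneg_left n1).trans_eq h) n2
      exact Prod.ext (RightCStarModule.inner_self.mp h1) (RightCStarModule.inner_self.mp h2)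
    · intro h
      subst h
      change ⟪(0 : E), 0⟫_A + ⟪(0 : F), 0⟫_A = 0
      rw [(RightCStarModule.inner_self (A := A) (x := (0 : E))).mpr rfl,
        (RightCStarModule.inner_self (A := A) (x := (0 : F))).mpr rfl, add_zero]
  inner_op_smul_right {a x y} := by
    change ⟪x.1, y.1 <• a⟫_A + ⟪x.2, y.2 <• a⟫_A = (⟪x.1, y.1⟫_A + ⟪x.2, y.2⟫_A) * a
    rw [RightCStarModule.inner_op_smul_right, RightCStarModule.inner_op_smul_right, add_mul]
  inner_smul_right_complex {z x y} := by
    change ⟪x.1, z • y.1⟫_A + ⟪x.2, z • y.2⟫_A = z • (⟪x.1, y.1⟫_A + ⟪x.2, y.2⟫_A)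
    rw [RightCStarModule.inner_smul_right_complex, RightCStarModule.inner_smul_right_complex,
      smul_add]
  star_inner x y := by
    change star (⟪x.1, y.1⟫_A + ⟪x.2, y.2⟫_A) = ⟪y.1, x.1⟫_A + ⟪y.2, x.2⟫_A
    rw [star_add, RightCStarModule.star_inner, RightCStarModule.star_inner]
  norm_eq_sqrt_norm_inner_self x := rfl

noncomputable instance instNACGProd : NormedAddCommGroup C⋆ᵐᵒᵈ(A, E × F) :=
  NormedAddCommGroup.ofCore (RightCStarModule.normedSpaceCore' A)

end Prod

end RightCStarModule

namespace RegularOperators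

variable (A : Type*) [NonUnitalCStarAlgebra A] [PartialOrder A] [StarOrderedRing A]

section Defs

variable {E F : Type*}
  [NormedAddCommGroup E] [Module ℂ E] [SMul Aᵐᵒᵖ E] [RightCStarModule A E]
  [NormedAddCommGroup F] [Module ℂ F] [SMul Aᵐᵒᵖ F] [RightCStarModule A F]

/-- Orthogonal complement of a subset w.r.t. the `A`-valued inner product. -/
def ortho (S : Set E) : Set E := {y | ∀ u ∈ S, ⟪u, y⟫_A = 0}

/-- `S` is orthogonally complemented (an orthogonal summand): every element of `E`
decomposes as a sum of an element of `S` and an element of `S^⊥`. -/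
def OrthoComplemented (S : Set E) : Prop := ∀ z : E, ∃ u ∈ S, ∃ v ∈ ortho A S, z = u + v

/-- A partially defined operator is `A`-linear (for the right `A`-module action). -/
def AModuleMap (t : E →ₗ.[ℂ] F) : Prop :=
  ∀ (a : A) (x : t.domain), ∃ hx : (x : E) <• a ∈ t.domain, t ⟨(x : E) <• a, hx⟩ = (t x) <• a

/-- Kernel of a partially defined operator, as a subset of `E`. -/
def kerSet (t : E →ₗ.[ℂ] F) : Set E := {x | ∃ hx : x ∈ t.domain, t ⟨x, hx⟩ = 0}

/-- Range of a partially defined operator. -/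
def ranSet (t : E →ₗ.[ℂ] F) : Set F := {y | ∃ x : t.domain, t x = y}

/-- Domain of the adjoint: those `y` for which some `z` satisfies `⟪tx, y⟫ = ⟪x, z⟫`
for all `x` in the domain of `t`. -/
def adjDomain (t : E →ₗ.[ℂ] F) : Set F :=
  {y | ∃ z : E, ∀ x : t.domain, ⟪t x, y⟫_A = ⟪(x : E), z⟫_A}

/-- `s` is the adjoint operator `t*` of `t`. -/
structure IsAdjoint (t : E →ₗ.[ℂ] F) (s : F →ₗ.[ℂ] E) : Prop where
  dom : (s.domain : Set F) = adjDomain A t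
  inner_eq : ∀ (x : t.domain) (y : s.domain), ⟪t x, (y : F)⟫_A = ⟪(x : E), s y⟫_A

/-- The range of `1 + t*t` (where `s` plays the role of `t*`). -/
def onePlusRange (t : E →ₗ.[ℂ] F) (s : F →ₗ.[ℂ] E) : Set E :=
  {u | ∃ (x : t.domain) (h : t x ∈ s.domain), (x : E) + s ⟨t x, h⟩ = u}

/-- `t` is a regular operator with adjoint `s`: it is `A`-linear, densely defined,
closed, adjointable with densely defined adjoint, and `1 + t*t` has dense range. -/
structure IsRegular (t : E →ₗ.[ℂ] F) (s : F →ₗ.[ℂ] E) : Prop where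
  amod : AModuleMap A t
  denseDom : Dense (t.domain : Set E)
  closedGraph : IsClosed (t.graph : Set (E × F))
  adj : IsAdjoint A t s
  denseAdjDom : Dense (s.domain : Set F)
  denseOnePlusRange : Dense (onePlusRange t s)

/-- The graph of `t` inside the Hilbert `A`-module `E ⊕ F`. -/
def graphSet (t : E →ₗ.[ℂ] F) : Set (C⋆ᵐᵒᵈ(A, E × F)) :=
  {w | ∃ x : t.domain, WithCStarModule.equiv A (E × F) w = ((x : E), t x)}

/-- The range of `P_F ∘ P_{G(t)^⊥}`, i.e. the image of `G(t)^⊥ ⊆ E ⊕ F` under the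
canonical projection onto `F`. -/
def pfRange (t : E →ₗ.[ℂ] F) : Set F :=
  {y | ∃ w ∈ ortho A (graphSet A t), (WithCStarModule.equiv A (E × F) w).2 = y}

end Defs

end RegularOperators

/-!
Since `Ran T` is closed, the open mapping theorem gives `‖y‖ ≤ K ‖T* y‖` on `M = Ran T`. As the
norm of a C⋆-algebra is monotone on positive elements, this upgrades to
`‖y‖ ≤ K² ‖(T T* + ε) y‖` on `M` for every `ε ≥ 0`, and the method of continuity makes `T T*`
invertible on `M`; hence `Ran T = Ran (T T* T)`. Choosing `x` with `T T* T x = T z` splits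
`z = (z - T* T x) + T* T x` along `Ker T + Ran T*`, and doing this for `z = T* y` forces
`T* (y - T x) = 0`, which splits `F` along `Ran T + Ker T*`. In both splittings the summands are
orthogonal, and that identifies each orthogonal complement.
-/

namespace RightCStarModule

variable {A E : Type*} [NonUnitalCStarAlgebra A] [PartialOrder A]
  [AddCommGroup E] [Module ℂ E] [SMul Aᵐᵒᵖ E] [Norm E] [RightCStarModule A E]

lemma inner_zero_left {x : E} : ⟪0, x⟫_A = 0 :=
  CStarModule.inner_zero_right (A := A) (E := ConjSyn A E) (x := x)

lemma inner_zero_right {x : E} : ⟪x, 0⟫_A = 0 :=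
  CStarModule.inner_zero_left (A := A) (E := ConjSyn A E) (x := x)

lemma inner_sub_right {x y z : E} : ⟪x, y - z⟫_A = ⟪x, y⟫_A - ⟪x, z⟫_A :=
  CStarModule.inner_sub_left (A := A) (E := ConjSyn A E) (x := y) (y := z) (z := x)

lemma norm_sq_eq (x : E) : ‖x‖ ^ 2 = ‖⟪x, x⟫_A‖ := by
  rw [norm_eq_sqrt_norm_inner_self x, Real.sq_sqrt (norm_nonneg _)]

lemma adjoint_inner_left {F : Type*} [AddCommGroup F] [Module ℂ F] [SMul Aᵐᵒᵖ F] [Norm F]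
    [RightCStarModule A F] {T : E → F} {Ts : F → E} (hadj : ∀ x y, ⟪T x, y⟫_A = ⟪x, Ts y⟫_A)
    (y : F) (x : E) : ⟪Ts y, x⟫_A = ⟪y, T x⟫_A := by
  rw [← star_inner x, ← hadj, star_inner]

variable [StarOrderedRing A]

lemma norm_inner_le (x y : E) : ‖⟪x, y⟫_A‖ ≤ ‖x‖ * ‖y‖ := by
  rw [mul_comm]
  exact CStarModule.norm_inner_le (A := A) (ConjSyn A E) (x := y) (y := x)

lemma norm_sq_le_norm_inner_self_add (x : E) {a : A} (ha : 0 ≤ a) :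
    ‖x‖ ^ 2 ≤ ‖⟪x, x⟫_A + a‖ := by
  rw [norm_sq_eq]
  exact CStarAlgebra.norm_le_norm_of_nonneg_of_le inner_self_nonneg (le_add_of_nonneg_right ha)

end RightCStarModule

namespace RegularOperators

variable {A : Type*} [NonUnitalCStarAlgebra A] [PartialOrder A]
  {E F : Type*} [NormedAddCommGroup E] [Module ℂ E] [SMul Aᵐᵒᵖ E] [RightCStarModule A E]
  [NormedAddCommGroup F] [Module ℂ F] [SMul Aᵐᵒᵖ F] [RightCStarModule A F]

lemma sub_mem_ortho {S : Set E} {x y : E} (hx : x ∈ ortho A S) (hy : y ∈ ortho A S) :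
    x - y ∈ ortho A S := fun u hu => by
  rw [RightCStarModule.inner_sub_right, hx u hu, hy u hu, sub_zero]

lemma eq_zero_of_mem_of_mem_ortho {S : Set E} {x : E} (hx : x ∈ S) (hx' : x ∈ ortho A S) :
    x = 0 :=
  RightCStarModule.inner_self.mp (hx' x hx)

lemma orthoComplemented_and_ortho_eq_of_forall_eq_add {K L : Set E} (hL : L ⊆ ortho A K)
    (h : ∀ z, ∃ u ∈ K, ∃ v ∈ L, z = u + v) : OrthoComplemented A K ∧ ortho A K = L := by
  refine ⟨fun z => ?_, subset_antisymm (fun z hz => ?_) hL⟩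
  · obtain ⟨u, hu, v, hv, rfl⟩ := h z
    exact ⟨u, hu, v, hL hv, rfl⟩
  · obtain ⟨u, hu, v, hv, rfl⟩ := h z
    have hu0 : u = 0 := eq_zero_of_mem_of_mem_ortho hu (by simpa using sub_mem_ortho hz (hL hv))
    simpa [hu0] using hv

lemma range_subset_ortho_ker {T : E → F} {Ts : F → E}
    (hadj : ∀ x y, ⟪T x, y⟫_A = ⟪x, Ts y⟫_A) : Set.range Ts ⊆ ortho A {x | T x = 0} := by
  rintro _ ⟨y, rfl⟩ x (hx : T x = 0)
  rw [← hadj, hx, RightCStarModule.inner_zero_left]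

lemma ker_subset_ortho_range {T : E → F} {Ts : F → E}
    (hadj : ∀ x y, ⟪T x, y⟫_A = ⟪x, Ts y⟫_A) : {y | Ts y = 0} ⊆ ortho A (Set.range T) := by
  rintro y (hy : Ts y = 0) _ ⟨x, rfl⟩
  rw [hadj, hy, RightCStarModule.inner_zero_right]

end RegularOperators

namespace ContinuousLinearMap

lemma exists_preimage_norm_le_of_isClosed_range {𝕜 E F : Type*} [NontriviallyNormedField 𝕜]
    [NormedAddCommGroup E] [NormedSpace 𝕜 E] [CompleteSpace E]
    [NormedAddCommGroup F] [NormedSpace 𝕜 F] [CompleteSpace F]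
    (f : E →L[𝕜] F) (hf : IsClosed (Set.range f)) :
    ∃ K > 0, ∀ y ∈ Set.range f, ∃ x, f x = y ∧ ‖x‖ ≤ K * ‖y‖ := by
  have : CompleteSpace (LinearMap.range (f : E →ₗ[𝕜] F)) :=
    (show IsClosed (LinearMap.range (f : E →ₗ[𝕜] F) : Set F) from hf).completeSpace_coe
  obtain ⟨K, hK, hpre⟩ :=
    f.rangeRestrict.exists_preimage_norm_le (LinearMap.surjective_rangeRestrict _)
  refine ⟨K, hK, fun y hy => ?_⟩
  obtain ⟨x, hx, hxK⟩ := hpre ⟨y, hy⟩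
  exact ⟨x, congrArg Subtype.val hx, hxK⟩

variable {𝕜 X : Type*} [RCLike 𝕜] [NormedAddCommGroup X] [NormedSpace 𝕜 X] [CompleteSpace X]

lemma isUnit_of_norm_sub_lt {a b : X →L[𝕜] X} {c : ℝ} (ha : IsUnit a)
    (hc : ∀ x, c * ‖x‖ ≤ ‖a x‖) (hab : ‖b - a‖ < c) : IsUnit b := by
  nontriviality X →L[𝕜] X
  obtain ⟨u, rfl⟩ := ha
  have hc0 : 0 < c := (norm_nonneg _).trans_lt hab
  have hinv : ‖(↑u⁻¹ : X →L[𝕜] X)‖ ≤ c⁻¹ := by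
    refine opNorm_le_bound _ (inv_nonneg.mpr hc0.le) fun y => ?_
    have hy := hc ((↑u⁻¹ : X →L[𝕜] X) y)
    rw [← mul_apply_eq_comp, u.mul_inv, _root_.one_apply_eq_self] at hy
    rwa [le_inv_mul_iff₀ hc0]
  exact (u.ofNearby b (hab.trans_le ((le_inv_comm₀ hc0 (Units.norm_pos u⁻¹)).mpr hinv))).isUnit

/-- Method of continuity: `a + ε` is invertible for `ε > ‖a‖`, and invertibility propagates down
to `ε = 0` in steps of `c / 2`, each one a perturbation smaller than the lower bound `c`. -/
lemma isUnit_of_forall_le_norm_add_smul (a : X →L[𝕜] X) {c : ℝ} (hc : 0 < c)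
    (h : ∀ ε : ℝ, 0 ≤ ε → ∀ x, c * ‖x‖ ≤ ‖a x + (ε : 𝕜) • x‖) : IsUnit a := by
  have step : ∀ n : ℕ, ∀ ε : ℝ, 0 ≤ ε → ‖a‖ < ε + n * (c / 2) → IsUnit (a + (ε : 𝕜) • 1) := by
    intro n
    induction n with
    | zero =>
      intro ε hε ha
      have hε' : 0 < ε := by simpa using (norm_nonneg a).trans_lt ha
      refine isUnit_of_norm_sub_lt (a := (ε : 𝕜) • 1) (c := ε) ?_ (fun x => ?_) ?_
      · rw [← Algebra.algebraMap_eq_smul_one]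
        exact (isUnit_iff_ne_zero.mpr (RCLike.ofReal_ne_zero.mpr hε'.ne')).map _
      · rw [smul_apply, _root_.one_apply_eq_self, norm_smul, RCLike.norm_ofReal,
          abs_of_pos hε']
      · simpa using ha
    | succ n ih =>
      intro ε hε ha
      refine isUnit_of_norm_sub_lt (a := a + ((ε + c / 2 : ℝ) : 𝕜) • 1) (c := c)
        (ih _ (by positivity) (by push_cast at ha ⊢; linarith)) (h _ (by positivity)) ?_
      calc ‖a + (ε : 𝕜) • 1 - (a + ((ε + c / 2 : ℝ) : 𝕜) • 1)‖
          = ‖((c / 2 : ℝ) : 𝕜) • (1 : X →L[𝕜] X)‖ := by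
            rw [← norm_neg]; congr 1; push_cast; module
        _ ≤ c / 2 := by
            rw [norm_smul, RCLike.norm_ofReal, abs_of_pos (by positivity)]
            exact mul_le_of_le_one_right (by positivity) norm_id_le
        _ < c := half_lt_self hc
  obtain ⟨n, hn⟩ := exists_nat_gt (‖a‖ / (c / 2))
  simpa using step n 0 le_rfl (by rw [div_lt_iff₀ (by positivity)] at hn; simpa using hn)

end ContinuousLinearMap

namespace RegularOperators

variable {A : Type*} [NonUnitalCStarAlgebra A] [PartialOrder A] [StarOrderedRing A]
  {E F : Type*} [NormedAddCommGroup E] [NormedSpace ℂ E] [SMul Aᵐᵒᵖ E] [RightCStarModule A E]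
  [NormedAddCommGroup F] [NormedSpace ℂ F] [SMul Aᵐᵒᵖ F] [RightCStarModule A F]
  {T : E →L[ℂ] F} {Ts : F →L[ℂ] E}

lemma norm_le_mul_norm_adjoint_apply (hadj : ∀ x y, ⟪T x, y⟫_A = ⟪x, Ts y⟫_A) {K : ℝ}
    (hK : ∀ y ∈ Set.range T, ∃ x, T x = y ∧ ‖x‖ ≤ K * ‖y‖) {y : F} (hy : y ∈ Set.range T) :
    ‖y‖ ≤ K * ‖Ts y‖ := by
  obtain ⟨x, rfl, hx⟩ := hK y hy
  have h : ‖T x‖ ^ 2 ≤ K * ‖Ts (T x)‖ * ‖T x‖ :=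
    calc ‖T x‖ ^ 2 = ‖⟪x, Ts (T x)⟫_A‖ := by rw [RightCStarModule.norm_sq_eq, hadj]
      _ ≤ ‖x‖ * ‖Ts (T x)‖ := RightCStarModule.norm_inner_le _ _
      _ ≤ K * ‖Ts (T x)‖ * ‖T x‖ := by rw [mul_right_comm]; gcongr
  rcases (norm_nonneg (T x)).eq_or_lt with h0 | h0
  · simp [norm_eq_zero.mp h0.symm]
  · rw [sq] at h
    exact le_of_mul_le_mul_right h h0

open scoped ComplexOrder in
lemma norm_le_mul_norm_apply_adjoint_add_smul (hadj : ∀ x y, ⟪T x, y⟫_A = ⟪x, Ts y⟫_A) {K : ℝ}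
    (hK : ∀ y ∈ Set.range T, ∃ x, T x = y ∧ ‖x‖ ≤ K * ‖y‖) {y : F} (hy : y ∈ Set.range T)
    {ε : ℝ} (hε : 0 ≤ ε) : ‖y‖ ≤ K ^ 2 * ‖T (Ts y) + (ε : ℂ) • y‖ := by
  have hTs : ‖Ts y‖ ^ 2 ≤ ‖y‖ * ‖T (Ts y) + (ε : ℂ) • y‖ :=
    calc ‖Ts y‖ ^ 2 ≤ ‖⟪Ts y, Ts y⟫_A + (ε : ℂ) • ⟪y, y⟫_A‖ :=
          RightCStarModule.norm_sq_le_norm_inner_self_add _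
            (smul_nonneg (by exact_mod_cast hε) RightCStarModule.inner_self_nonneg)
      _ = ‖⟪y, T (Ts y) + (ε : ℂ) • y⟫_A‖ := by
          rw [RightCStarModule.inner_add_right, RightCStarModule.inner_smul_right_complex,
            RightCStarModule.adjoint_inner_left hadj]
      _ ≤ ‖y‖ * ‖T (Ts y) + (ε : ℂ) • y‖ := RightCStarModule.norm_inner_le _ _
  have hy' := norm_le_mul_norm_adjoint_apply hadj hK hy
  have h : ‖y‖ * ‖y‖ ≤ K ^ 2 * ‖T (Ts y) + (ε : ℂ) • y‖ * ‖y‖ :=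
    calc ‖y‖ * ‖y‖ ≤ K ^ 2 * ‖Ts y‖ ^ 2 := by nlinarith [norm_nonneg y]
      _ ≤ K ^ 2 * (‖y‖ * ‖T (Ts y) + (ε : ℂ) • y‖) := by gcongr
      _ = K ^ 2 * ‖T (Ts y) + (ε : ℂ) • y‖ * ‖y‖ := by ring
  rcases (norm_nonneg y).eq_or_lt with h0 | h0
  · rw [← h0]
    positivity
  · exact le_of_mul_le_mul_right h h0

variable [CompleteSpace E] [CompleteSpace F]

lemma exists_apply_adjoint_apply_eq (hadj : ∀ x y, ⟪T x, y⟫_A = ⟪x, Ts y⟫_A)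
    (hran : IsClosed (Set.range T)) {y : F} (hy : y ∈ Set.range T) :
    ∃ x, T (Ts (T x)) = y := by
  obtain ⟨K, hK0, hK⟩ := T.exists_preimage_norm_le_of_isClosed_range hran
  set M := LinearMap.range (T : E →ₗ[ℂ] F)
  have : CompleteSpace M := (show IsClosed (M : Set F) from hran).completeSpace_coe
  let S : M →L[ℂ] M := (T ∘L Ts ∘L M.subtypeL).codRestrict M fun m => LinearMap.mem_range_self _ _
  obtain ⟨u, hu⟩ := S.isUnit_of_forall_le_norm_add_smul (c := (K ^ 2)⁻¹) (by positivity)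
    fun ε hε m => by
      rw [inv_mul_le_iff₀ (by positivity)]
      exact norm_le_mul_norm_apply_adjoint_add_smul hadj hK m.2 hε
  set m := (↑u⁻¹ : M →L[ℂ] M) ⟨y, hy⟩
  obtain ⟨x, hx⟩ : (m : F) ∈ Set.range T := m.2
  refine ⟨x, ?_⟩
  have hinv := congrArg Subtype.val (congrArg (· ⟨y, hy⟩) u.mul_inv)
  calc T (Ts (T x)) = (S m : F) := by rw [hx]; rfl
    _ = y := by rw [← hu]; exact hinv

end RegularOperators

open RegularOperators
variable {A : Type*} [NonUnitalCStarAlgebra A] [PartialOrder A] [StarOrderedRing A]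
variable {E F : Type*}
  [NormedAddCommGroup E] [Module ℂ E] [SMul Aᵐᵒᵖ E] [RightCStarModule A E] [CompleteSpace E]
  [NormedAddCommGroup F] [Module ℂ F] [SMul Aᵐᵒᵖ F] [RightCStarModule A F] [CompleteSpace F]

theorem ker_and_range_orthoComplemented_of_closed_range_general
    (T : E →L[ℂ] F) (Ts : F →L[ℂ] E)
    (hadj : ∀ (x : E) (y : F), ⟪T x, y⟫_A = ⟪x, Ts y⟫_A)
    (hran : IsClosed (Set.range T)) :
    (OrthoComplemented A {x : E | T x = 0} ∧
      ortho A {x : E | T x = 0} = Set.range Ts) ∧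
    (OrthoComplemented A (Set.range T) ∧
      ortho A (Set.range T) = {y : F | Ts y = 0}) := by
  let _ : NormedSpace ℂ E := .ofCore (RightCStarModule.normedSpaceCore' A)
  let _ : NormedSpace ℂ F := .ofCore (RightCStarModule.normedSpaceCore' A)
  refine ⟨orthoComplemented_and_ortho_eq_of_forall_eq_add (range_subset_ortho_ker hadj)
    fun z => ?_, orthoComplemented_and_ortho_eq_of_forall_eq_add (ker_subset_ortho_range hadj)
    fun y => ?_⟩
  · obtain ⟨x, hx⟩ := exists_apply_adjoint_apply_eq hadj hran ⟨z, rfl⟩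
    exact ⟨z - Ts (T x), by simp [hx], Ts (T x), ⟨T x, rfl⟩, by abel⟩
  · obtain ⟨x, hx⟩ := exists_apply_adjoint_apply_eq hadj hran ⟨Ts y, rfl⟩
    have hker : Ts (y - T x) = 0 :=
      eq_zero_of_mem_of_mem_ortho (S := {x : E | T x = 0}) (by simp [hx])
        (range_subset_ortho_ker hadj ⟨y - T x, rfl⟩)
    exact ⟨T x, ⟨x, rfl⟩, y - T x, hker, by abel⟩

/-- for a bounded `A`-linear adjointable operator `T` with closed range,
`Ker(T)` is orthogonally complemented in `E` with complement `Ran(T*)`, and `Ran(T)`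
is orthogonally complemented in `F` with complement `Ker(T*)`. -/
theorem ker_and_range_orthoComplemented_of_closed_range
    (T : E →L[ℂ] F) (Ts : F →L[ℂ] E)
    (hmod : ∀ (a : A) (x : E), T (x <• a) = (T x) <• a)
    (hadj : ∀ (x : E) (y : F), ⟪T x, y⟫_A = ⟪x, Ts y⟫_A)
    (hran : IsClosed (Set.range T)) :
    (OrthoComplemented A {x : E | T x = 0} ∧
      ortho A {x : E | T x = 0} = Set.range Ts) ∧
    (OrthoComplemented A (Set.range T) ∧
      ortho A (Set.range T) = {y : F | Ts y = 0}) :=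
  ker_and_range_orthoComplemented_of_closed_range_general T Ts hadj hran
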